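/- arXiv:2302.12752 — 8 statements merged into one kernel-verified Lean document; each statement's English description precedes it below -/
import Mathlib

section
/- Let G be a finite simple graph with minimum degree δ(G) ≥ α̃(G), where α̃(G) is the bipartite independence number. Then G is connected. -/
open SimpleGraph Finset

variable {V : Type*}

/-- Between every two disjoint vertex sets of sizes `a` and `b` there is an edge. -/
def HasEdgeBetween (G : SimpleGraph V) (a b : ℕ) : Prop :=
  ∀ A B : Finset V, Disjoint A B → A.card = a → B.card = b →
    ∃ x ∈ A, ∃ y ∈ B, G.Adj x y

/-- The bipartite independence number α̃(G). -/
noncomputable def biAlpha (G : SimpleGraph V) : ℕ :=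
  sInf {k | ∃ a b : ℕ, 0 < a ∧ 0 < b ∧ a + b = k + 1 ∧ HasEdgeBetween G a b}

/-- `s` is an independent set in `G`. -/
def IsIndepSet (G : SimpleGraph V) (s : Finset V) : Prop :=
  ∀ x ∈ s, ∀ y ∈ s, x ≠ y → ¬ G.Adj x y

/-- The independence number α(G). -/
noncomputable def indepNum (G : SimpleGraph V) : ℕ :=
  sSup {n | ∃ s : Finset V, _root_.IsIndepSet G s ∧ s.card = n}

/-- The graph C̃_ℓ: a cycle of length ℓ together with an extra vertex adjacent to
two consecutive vertices of the cycle. -/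
def tildeC (ℓ : ℕ) : SimpleGraph (Fin ℓ ⊕ Unit) :=
  SimpleGraph.fromRel (fun x y =>
    match x, y with
    | Sum.inl i, Sum.inl j => (i.val + 1) % ℓ = j.val
    | Sum.inl i, Sum.inr _ => i.val = 0 ∨ i.val = 1
    | _, _ => False)

/-- `G` contains a (not necessarily induced) copy of `H`. -/
def ContainsCopy {W : Type*} (H : SimpleGraph W) (G : SimpleGraph V) : Prop :=
  ∃ f : H →g G, Function.Injective f

/-- `G` is pancyclic: it has cycles of every length from 3 to `|V|`. -/
def Pancyclic (G : SimpleGraph V) [Fintype V] : Prop :=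
  ∀ ℓ, 3 ≤ ℓ → ℓ ≤ Fintype.card V →
    ∃ (v : V) (c : G.Walk v v), c.IsCycle ∧ c.length = ℓ

namespace SimpleGraph

variable {G : SimpleGraph V}

theorem degree_lt_card_of_neighborFinset_subset [DecidableEq V] {u : V}
    [Fintype (G.neighborSet u)] {s : Finset V} (hu : u ∈ s) (hs : G.neighborFinset u ⊆ s) :
    G.degree u < #s := by
  rw [← card_neighborFinset_eq_degree, Nat.lt_iff_add_one_le,
    ← card_insert_of_notMem (G.notMem_neighborFinset_self u)]
  exact card_le_card (insert_subset hu hs)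

theorem nonempty_of_minDegree_pos [Fintype V] [DecidableRel G.Adj] (h : 0 < G.minDegree) :
    Nonempty V := by
  by_contra hV
  have : IsEmpty V := not_nonempty_iff.mp hV
  exact h.ne' G.minDegree_of_subsingleton

end SimpleGraph

/-- `a = |V| + 1, b = 1` lies in the set defining `biAlpha`, vacuously. -/
theorem exists_hasEdgeBetween_biAlpha [Finite V] (G : SimpleGraph V) :
    ∃ a b : ℕ, 0 < a ∧ 0 < b ∧ a + b = biAlpha G + 1 ∧ HasEdgeBetween G a b := by
  have := Fintype.ofFinite V
  refine Nat.sInf_mem (s := {k | ∃ a b : ℕ, 0 < a ∧ 0 < b ∧ a + b = k + 1 ∧ HasEdgeBetween G a b})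
    ⟨Fintype.card V + 1, Fintype.card V + 1, 1, by omega, by omega, rfl, ?_⟩
  intro A _ _ hA _
  have := A.card_le_univ
  omega

namespace HasEdgeBetween

variable {G : SimpleGraph V} {a b : ℕ}

theorem exists_adj_of_le_card (h : HasEdgeBetween G a b) {S T : Finset V} (hST : Disjoint S T)
    (hS : a ≤ #S) (hT : b ≤ #T) : ∃ x ∈ S, ∃ y ∈ T, G.Adj x y := by
  obtain ⟨A, hAS, rfl⟩ := exists_subset_card_eq hS
  obtain ⟨B, hBT, rfl⟩ := exists_subset_card_eq hT
  obtain ⟨x, hx, y, hy, hxy⟩ := h A B (hST.mono hAS hBT) rfl rfl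
  exact ⟨x, hAS hx, y, hBT hy, hxy⟩

/-- The component of `u` and its complement each contain a closed neighbourhood, so both are
large enough to be joined by an edge; but no edge leaves a component. -/
theorem preconnected [Fintype V] [DecidableRel G.Adj] (h : HasEdgeBetween G a b)
    (ha : a ≤ G.minDegree + 1) (hb : b ≤ G.minDegree + 1) : G.Preconnected := by
  classical
  intro u v
  by_contra huv
  set C : Finset V := {w | G.Reachable u w}
  have hC : ∀ w, w ∈ C ↔ G.Reachable u w := by simp [C]
  have hCu : G.degree u < #C :=
    degree_lt_card_of_neighborFinset_subset ((hC u).2 .rfl) fun w hw =>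
      (hC w).2 ((mem_neighborFinset G u w).1 hw).reachable
  have hCv : G.degree v < #Cᶜ :=
    degree_lt_card_of_neighborFinset_subset (by simpa [hC] using huv) fun w hw => by
      simpa [hC] using fun huw => huv (huw.trans ((mem_neighborFinset G v w).1 hw).symm.reachable)
  obtain ⟨x, hx, y, hy, hxy⟩ := h.exists_adj_of_le_card (S := C) disjoint_compl_right
    (by linarith [G.minDegree_le_degree u]) (by linarith [G.minDegree_le_degree v])
  exact (mem_compl.1 hy) ((hC y).2 (((hC x).1 hx).trans hxy.reachable))

end HasEdgeBetween

theorem connected_of_minDegree_ge_biAlpha [Fintype V] (G : SimpleGraph V)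
    [DecidableRel G.Adj] (h : biAlpha G ≤ G.minDegree) :
    G.Connected := by
  obtain ⟨a, b, ha, hb, hab, hedge⟩ := exists_hasEdgeBetween_biAlpha G
  have := G.nonempty_of_minDegree_pos (by omega)
  exact ⟨hedge.preconnected (by omega) (by omega)⟩
end

section
/- Let G be a finite simple triangle-free graph, let k be a natural number with δ(G) ≥ k, and suppose there exist positive integers a ≤ b with a + b = k + 1 such that every pair of disjoint vertex sets of sizes a and b has an edge between them. Assume additionally that every vertex of G has degree exactly k and no vertex neighborhood contains an edge. Then any two non-adjacent vertices u, v of G have at least b common neighbors. -/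
open SimpleGraph Finset

variable {V : Type*}

theorem HasEdgeBetween.exists_adj_of_le_card_s5 {G : SimpleGraph V} {a b : ℕ}
    (hE : HasEdgeBetween G a b) {A B : Finset V} (hAB : Disjoint A B)
    (hA : a ≤ #A) (hB : b ≤ #B) : ∃ x ∈ A, ∃ y ∈ B, G.Adj x y := by
  obtain ⟨A', hA'A, rfl⟩ := exists_subset_card_eq hA
  obtain ⟨B', hB'B, rfl⟩ := exists_subset_card_eq hB
  obtain ⟨x, hx, y, hy, hxy⟩ := hE A' B' (hAB.mono hA'A hB'B) rfl rfl
  exact ⟨x, hA'A hx, y, hB'B hy, hxy⟩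

/-- If `u` had at least `a` neighbours `A` outside `N(v)`, then `A` and `{v} ∪ (N(u) \ A)`
would be disjoint sets of sizes `a` and `≥ b` with no edge between them: `A` misses `N(v)`,
and an edge inside `N(u)` closes a triangle with `u`. -/
theorem SimpleGraph.degree_lt_add_card_inter_neighborFinset [Fintype V] [DecidableEq V]
    {G : SimpleGraph V} [DecidableRel G.Adj] {a b : ℕ} (hE : HasEdgeBetween G a b)
    (htf : G.CliqueFree 3) {u v : V} (hna : ¬G.Adj u v) (hdeg : a + b ≤ G.degree u + 1) :
    G.degree u < a + #(G.neighborFinset u ∩ G.neighborFinset v) := by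
  by_contra! hlt
  have hsdiff : a ≤ #(G.neighborFinset u \ G.neighborFinset v) := by
    have := card_sdiff_add_card_inter (G.neighborFinset u) (G.neighborFinset v)
    rw [card_neighborFinset_eq_degree] at this
    omega
  obtain ⟨A, hA, hAcard⟩ := exists_subset_card_eq hsdiff
  have hAu : A ⊆ G.neighborFinset u := hA.trans sdiff_subset
  have hvA : v ∉ G.neighborFinset u \ A := fun h => hna (by simpa using (mem_sdiff.1 h).1)
  have hBcard : b ≤ #(insert v (G.neighborFinset u \ A)) := by
    rw [card_insert_of_notMem hvA, card_sdiff_of_subset hAu, card_neighborFinset_eq_degree]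
    omega
  have hdisj : Disjoint A (insert v (G.neighborFinset u \ A)) :=
    disjoint_insert_right.2 ⟨fun h => hna (by simpa using hAu h), disjoint_sdiff⟩
  obtain ⟨x, hx, y, hy, hxy⟩ := hE.exists_adj_of_le_card_s5 hdisj hAcard.ge hBcard
  rcases mem_insert.1 hy with rfl | hy
  · exact (mem_sdiff.1 (hA hx)).2 (by simpa using hxy.symm)
  · exact G.isIndepSet_neighborSet_of_triangleFree htf u (by simpa using hAu hx)
      (by simpa using (mem_sdiff.1 hy).1) hxy.ne hxy

theorem common_neighbors_of_triangleFree_general [Fintype V] [DecidableEq V]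
    (G : SimpleGraph V) [DecidableRel G.Adj] (k a b : ℕ)
    (hδ : k ≤ G.minDegree) (hsum : a + b = k + 1)
    (hE : HasEdgeBetween G a b)
    (htf : G.CliqueFree 3)
    (u v : V) (hna : ¬ G.Adj u v) :
    b ≤ (G.neighborFinset u ∩ G.neighborFinset v).card := by
  have hdeg : k ≤ G.degree u := hδ.trans (G.minDegree_le_degree u)
  have := G.degree_lt_add_card_inter_neighborFinset hE htf hna (by omega)
  omega

theorem common_neighbors_of_triangleFree [Fintype V] [DecidableEq V]
    (G : SimpleGraph V) [DecidableRel G.Adj] (k a b : ℕ)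
    (hδ : k ≤ G.minDegree) (ha : 0 < a) (hab : a ≤ b) (hsum : a + b = k + 1)
    (hE : HasEdgeBetween G a b)
    (htf : G.CliqueFree 3)
    (hreg : ∀ v : V, G.degree v = k)
    (hnbhd : ∀ v x y : V, G.Adj v x → G.Adj v y → ¬ G.Adj x y)
    (u v : V) (huv : u ≠ v) (hna : ¬ G.Adj u v) :
    b ≤ (G.neighborFinset u ∩ G.neighborFinset v).card :=
  common_neighbors_of_triangleFree_general G k a b hδ hsum hE htf u v hna
end

section
/- Let G be a finite simple triangle-free graph in which any two non-adjacent vertices have at least m common neighbors, where 2m exceeds the maximum degree of G. Then G contains no induced odd cycle of length at least 5; consequently G is bipartite. -/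
open SimpleGraph Finset

variable {V : Type*}

/-!
If a vertex `a` were neither equal nor adjacent to either end of an edge `cd`, its common
neighbourhoods with `c` and with `d` would be disjoint (no triangles) subsets of `N(a)` of size
at least `m` each, forcing `deg a ≥ 2m`. So every vertex meets or sees every edge. In a cycle of
length at least 5 the vertex `0` does not see the edge `23`; and for any vertex `a`, both `N(a)`
and its complement are independent, which is a bipartition.
-/

namespace SimpleGraph

variable {G : SimpleGraph V}

section Finite

variable [Fintype V] [DecidableEq V] [DecidableRel G.Adj]

lemma card_inter_neighborFinset_add_card_le_degree (htf : G.CliqueFree 3) {a c d : V}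
    (hcd : G.Adj c d) :
    #(G.neighborFinset a ∩ G.neighborFinset c) + #(G.neighborFinset a ∩ G.neighborFinset d) ≤
      G.degree a := by
  have hdisj : Disjoint (G.neighborFinset a ∩ G.neighborFinset c)
      (G.neighborFinset a ∩ G.neighborFinset d) := by
    refine Finset.disjoint_left.mpr fun x hxc hxd ↦ ?_
    simp only [Finset.mem_inter, mem_neighborFinset] at hxc hxd
    exact htf {c, d, x} (is3Clique_triple_iff.mpr ⟨hcd, hxc.2, hxd.2⟩)
  rw [← Finset.card_union_of_disjoint hdisj, ← card_neighborFinset_eq_degree]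
  exact Finset.card_le_card (Finset.union_subset Finset.inter_subset_left Finset.inter_subset_left)

lemma eq_or_adj_of_adj_of_maxDegree_lt {m : ℕ} (htf : G.CliqueFree 3)
    (hcommon : ∀ u v : V, u ≠ v → ¬ G.Adj u v →
      m ≤ #(G.neighborFinset u ∩ G.neighborFinset v))
    (hmax : G.maxDegree < 2 * m) (a : V) {c d : V} (hcd : G.Adj c d) :
    a = c ∨ a = d ∨ G.Adj a c ∨ G.Adj a d := by
  by_contra! ⟨hac, had, hnc, hnd⟩
  have := card_inter_neighborFinset_add_card_le_degree (a := a) htf hcd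
  have := hcommon a c hac hnc
  have := hcommon a d had hnd
  have := G.degree_le_maxDegree a
  omega

end Finite

lemma colorable_two_of_forall_eq_or_adj (htf : G.CliqueFree 3)
    (hdom : ∀ a c d : V, G.Adj c d → a = c ∨ a = d ∨ G.Adj a c ∨ G.Adj a d) :
    G.Colorable 2 := by
  classical
  cases isEmpty_or_nonempty V
  · exact Colorable.of_isEmpty 2
  obtain ⟨a⟩ := ‹Nonempty V›
  refine (Coloring.mk (fun v ↦ decide (G.Adj a v)) fun {u v} huv hcol ↦ ?_).colorable
  simp only [decide_eq_decide] at hcol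
  by_cases hau : G.Adj a u
  · exact htf {a, u, v} (is3Clique_triple_iff.mpr ⟨hau, hcol.mp hau, huv⟩)
  · rcases hdom a u v huv with rfl | rfl | h | h
    · exact hau (hcol.mpr huv)
    · exact hau huv.symm
    · exact hau h
    · exact hau (hcol.mpr h)

lemma isEmpty_cycleGraph_embedding_of_forall_eq_or_adj
    (hdom : ∀ a c d : V, G.Adj c d → a = c ∨ a = d ∨ G.Adj a c ∨ G.Adj a d) {ℓ : ℕ}
    (hℓ : 5 ≤ ℓ) : IsEmpty (cycleGraph ℓ ↪g G) := by
  obtain ⟨n, rfl⟩ : ∃ n, ℓ = n + 5 := ⟨ℓ - 5, by omega⟩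
  have h23 : (cycleGraph (n + 5)).Adj 2 3 := by
    rw [cycleGraph_adj, sub_eq_iff_eq_add, sub_eq_iff_eq_add]
    simp [Fin.ext_iff, Fin.val_add, Nat.mod_eq_of_lt]
  have h0 : ∀ i : Fin (n + 5), i = 2 ∨ i = 3 → 0 ≠ i ∧ ¬ (cycleGraph (n + 5)).Adj 0 i := by
    rintro i (rfl | rfl) <;> rw [cycleGraph_adj, sub_eq_iff_eq_add, sub_eq_iff_eq_add] <;>
      simp [Fin.ext_iff, Fin.val_add, Nat.mod_eq_of_lt]
  refine ⟨fun e ↦ ?_⟩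
  rcases hdom (e 0) (e 2) (e 3) (e.map_adj_iff.mpr h23) with h | h | h | h
  · exact (h0 2 (.inl rfl)).1 (e.injective h)
  · exact (h0 3 (.inr rfl)).1 (e.injective h)
  · exact (h0 2 (.inl rfl)).2 (e.map_adj_iff.mp h)
  · exact (h0 3 (.inr rfl)).2 (e.map_adj_iff.mp h)

end SimpleGraph

theorem no_induced_odd_cycle [Fintype V] [DecidableEq V]
    (G : SimpleGraph V) [DecidableRel G.Adj] (m : ℕ)
    (htf : G.CliqueFree 3)
    (hcommon : ∀ u v : V, u ≠ v → ¬ G.Adj u v →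
      m ≤ (G.neighborFinset u ∩ G.neighborFinset v).card)
    (hmax : G.maxDegree < 2 * m) :
    (∀ ℓ : ℕ, 5 ≤ ℓ → Odd ℓ → IsEmpty (SimpleGraph.cycleGraph ℓ ↪g G)) ∧
      G.Colorable 2 := by
  have hdom : ∀ a c d : V, G.Adj c d → a = c ∨ a = d ∨ G.Adj a c ∨ G.Adj a d :=
    fun a _ _ ↦ G.eq_or_adj_of_adj_of_maxDegree_lt htf hcommon hmax a
  exact ⟨fun _ hℓ _ ↦ isEmpty_cycleGraph_embedding_of_forall_eq_or_adj hdom hℓ,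
    colorable_two_of_forall_eq_or_adj htf hdom⟩
end

section
/- Let G be a finite simple graph such that between every two disjoint vertex sets of size 2 there is an edge. Let C be a cycle in G of length ℓ with 6 ≤ ℓ ≤ |V(G)| − 2. Then G contains a cycle of length ℓ + 1. -/
open SimpleGraph Finset

variable {V : Type*}

/-!
Write the cycle as `f : ZMod ℓ → V` and suppose there is no cycle of length `ℓ + 1`. If a vertex
`z` off the cycle is adjacent to `f i` and `f j`, then `f (i + 1)` and `f (j + 1)` are not adjacent:
otherwise `z, f j, f (j - 1), …, f (i + 1), f (j + 1), …, f i` is an `(ℓ + 1)`-cycle; likewise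
for `f (i - 1)` and `f (j - 1)`. Feeding suitable pairs into the `2`-`2` edge condition, this shows
first that `z` has no two neighbours at distance `1` or `2` on the cycle, and then that `z` has at
most one neighbour on the cycle as soon as some other vertex lies off it. Since `|V| ≥ ℓ + 2`, there
are two vertices `x`, `y` off the cycle, and the edge condition for `{x, y}` against the disjoint
pairs `{f 0, f 1}`, `{f 2, f 3}`, `{f 4, f 5}` gives three cycle vertices adjacent to `x` or `y`,
two of them to the same one.
-/

open Function

section

variable {G : SimpleGraph V}

theorem ZMod.natCast_ne_natCast_of_lt {n a b : ℕ} (ha : a < n) (hb : b < n) (hab : a ≠ b) :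
    (a : ZMod n) ≠ b := fun h => hab <| by
  simpa [ZMod.val_cast_of_lt ha, ZMod.val_cast_of_lt hb] using congrArg ZMod.val h

theorem HasEdgeBetween.adj_of_ne (hE : HasEdgeBetween G 2 2) {a b x y : V} (hab : a ≠ b)
    (hxy : x ≠ y) (hax : a ≠ x) (hay : a ≠ y) (hbx : b ≠ x) (hby : b ≠ y) :
    G.Adj a x ∨ G.Adj a y ∨ G.Adj b x ∨ G.Adj b y := by
  classical
  obtain ⟨p, hp, q, hq, hpq⟩ := hE {a, b} {x, y} (by simp [*, eq_comm])
    (card_pair hab) (card_pair hxy)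
  simp only [mem_insert, mem_singleton] at hp hq
  rcases hp with rfl | rfl <;> rcases hq with rfl | rfl <;> tauto

namespace SimpleGraph

/-- A copy of `cycleGraph n` in `G`, indexed by `ZMod n` so that positions on the cycle can be
computed with ring arithmetic. -/
structure IsCycleEmbedding {n : ℕ} (G : SimpleGraph V) (f : ZMod n → V) : Prop where
  injective : Injective f
  adj : ∀ k, G.Adj (f k) (f (k + 1))

theorem cycleGraph_isContained_iff_exists_isCycleEmbedding {n : ℕ} (hn : 2 ≤ n) :
    cycleGraph n ⊑ G ↔ ∃ f : ZMod n → V, G.IsCycleEmbedding f := by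
  obtain ⟨m, rfl⟩ : ∃ m, n = m + 2 := ⟨n - 2, by omega⟩
  constructor
  · rintro ⟨e⟩
    exact ⟨e, e.injective, fun k => e.toHom.map_adj (Or.inr (add_sub_cancel_left k 1))⟩
  · rintro ⟨f, hf, hadj⟩
    refine ⟨⟨⟨f, fun {u v} huv => ?_⟩, hf⟩⟩
    rcases huv with h | h <;> rw [sub_eq_iff_eq_add'] at h
    · exact h ▸ (hadj v).symm
    · exact h ▸ hadj u

theorem cycleGraph_succ_isContained_of_path {n : ℕ} (hn : 2 ≤ n) {g : ℕ → V}
    (hg : Set.InjOn g (Set.Iio n)) (hadj : ∀ k, k + 1 < n → G.Adj (g k) (g (k + 1)))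
    {z : V} (hz : ∀ k < n, g k ≠ z) (hz₀ : G.Adj z (g 0)) (hz₁ : G.Adj z (g (n - 1))) :
    cycleGraph (n + 1) ⊑ G := by
  have : Fact (1 < n + 1) := ⟨by omega⟩
  let h : ZMod (n + 1) → V := fun k => if k.val < n then g k.val else z
  refine (cycleGraph_isContained_iff_exists_isCycleEmbedding (by omega)).2
    ⟨h, fun a b hab => ZMod.val_injective _ ?_, fun k => ?_⟩
  · have := a.val_lt
    have := b.val_lt
    simp only [h] at hab
    split_ifs at hab with ha hb hb
    · exact hg ha hb hab
    · exact absurd hab (hz _ ha)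
    · exact absurd hab.symm (hz _ hb)
    · omega
  · have := k.val_lt
    simp only [h, ZMod.val_add, ZMod.val_one]
    rcases lt_trichotomy (k.val + 1) n with hlt | heq | hgt
    · rw [Nat.mod_eq_of_lt (by omega), if_pos (by omega), if_pos hlt]
      exact hadj _ hlt
    · rw [Nat.mod_eq_of_lt (by omega), if_pos (by omega), if_neg (by omega),
        show k.val = n - 1 by omega]
      exact hz₁.symm
    · rw [show k.val + 1 = n + 1 by omega, Nat.mod_self, if_neg (by omega), if_pos (by omega)]
      exact hz₀

namespace IsCycleEmbedding

variable {ℓ : ℕ} {f : ZMod ℓ → V}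

theorem comp_neg (hC : G.IsCycleEmbedding f) : G.IsCycleEmbedding (fun k => f (-k)) :=
  ⟨hC.injective.comp neg_injective, fun k => by simpa using (hC.adj (-(k + 1))).symm⟩

/-- The `ℓ + 1`-cycle `z, f j, f (j - 1), …, f (i + 1), f (j + 1), f (j + 2), …, f i`. -/
theorem cycleGraph_succ_isContained_of_chord [NeZero ℓ] (hC : G.IsCycleEmbedding f) {z : V}
    (hz : z ∉ Set.range f) {i j : ZMod ℓ} (hij : i ≠ j) (hzi : G.Adj z (f i))
    (hzj : G.Adj z (f j)) (hchord : G.Adj (f (i + 1)) (f (j + 1))) :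
    cycleGraph (ℓ + 1) ⊑ G := by
  set d := (j - i).val
  have hj : j = i + d := by rw [ZMod.natCast_zmod_val]; ring
  have hd0 : d ≠ 0 := by rw [Ne, ZMod.val_eq_zero, sub_eq_zero]; exact hij.symm
  have hdℓ : d < ℓ := ZMod.val_lt _
  -- `τ` reverses the first `d` positions of the cycle read from `f (i + 1)`.
  let τ : ℕ → ℕ := fun k => if k < d then d - 1 - k else k
  have hτ : ∀ k < ℓ, τ k < ℓ := fun k hk => by simp only [τ]; split_ifs <;> omega
  refine cycleGraph_succ_isContained_of_path (g := fun k => f (i + 1 + τ k)) (by omega)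
    (fun a ha b hb hab => ?_) (fun k hk => ?_) (fun k _ h => hz ⟨_, h⟩) ?_ ?_
  · by_contra hne
    refine ZMod.natCast_ne_natCast_of_lt (hτ a ha) (hτ b hb) (fun h => hne ?_)
      (add_left_cancel (hC.injective hab))
    simp only [τ] at h
    split_ifs at h <;> omega
  · simp only [τ]
    rcases lt_trichotomy (k + 1) d with hlt | heq | hgt
    · rw [if_pos (by omega), if_pos hlt]
      convert (hC.adj (i + 1 + (d - 1 - (k + 1) : ℕ))).symm using 2
      rw [show d - 1 - k = d - 1 - (k + 1) + 1 by omega]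
      push_cast
      ring
    · rw [if_pos (by omega), if_neg (by omega), show d - 1 - k = 0 by omega, heq]
      convert hchord using 2 <;> simp [hj, add_right_comm]
    · rw [if_neg (by omega), if_neg (by omega)]
      convert hC.adj (i + 1 + k) using 2
      push_cast
      ring
  · simp only [τ, if_pos (Nat.pos_of_ne_zero hd0), Nat.sub_zero]
    rw [Nat.cast_sub (Nat.one_le_iff_ne_zero.2 hd0)]
    convert hzj using 2
    rw [hj]
    ring
  · simp only [τ, if_neg (show ¬ℓ - 1 < d by omega)]
    rw [Nat.cast_sub (by omega), ZMod.natCast_self]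
    convert hzi using 2
    ring

theorem cycleGraph_succ_isContained_of_chord_sub_one [NeZero ℓ] (hC : G.IsCycleEmbedding f)
    {z : V} (hz : z ∉ Set.range f) {i j : ZMod ℓ} (hij : i ≠ j) (hzi : G.Adj z (f i))
    (hzj : G.Adj z (f j)) (hchord : G.Adj (f (i - 1)) (f (j - 1))) :
    cycleGraph (ℓ + 1) ⊑ G :=
  hC.comp_neg.cycleGraph_succ_isContained_of_chord (i := -i) (j := -j)
    (fun ⟨k, hk⟩ => hz ⟨-k, hk⟩) (neg_injective.ne hij) (by simpa using hzi)
    (by simpa using hzj) (by simpa [neg_add_eq_sub] using hchord)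

theorem not_adj_add_one (hC : G.IsCycleEmbedding f) (hno : ¬cycleGraph (ℓ + 1) ⊑ G)
    (hℓ : 2 ≤ ℓ) {z : V} (hz : z ∉ Set.range f) {k : ZMod ℓ} (hk : G.Adj z (f k)) :
    ¬G.Adj z (f (k + 1)) := fun hk1 => by
  have : NeZero ℓ := ⟨by omega⟩
  have h1 : (1 : ZMod ℓ) ≠ 0 := by
    exact_mod_cast ZMod.natCast_ne_natCast_of_lt (a := 1) (b := 0) (by omega) (by omega) one_ne_zero
  exact hno (hC.cycleGraph_succ_isContained_of_chord hz (left_eq_add.not.2 h1) hk hk1 (hC.adj _))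

theorem not_adj_add_two (hE : HasEdgeBetween G 2 2) (hC : G.IsCycleEmbedding f)
    (hno : ¬cycleGraph (ℓ + 1) ⊑ G) (hℓ : 5 ≤ ℓ) {z : V} (hz : z ∉ Set.range f) {k : ZMod ℓ}
    (hk : G.Adj z (f k)) : ¬G.Adj z (f (k + 2)) := fun hk2 => by
  have : NeZero ℓ := ⟨by omega⟩
  have hz' : ∀ m, f m ≠ z := fun m h => hz ⟨m, h⟩
  have h2 : (2 : ZMod ℓ) ≠ 0 := by
    exact_mod_cast ZMod.natCast_ne_natCast_of_lt (a := 2) (b := 0) (by omega) (by omega) (by simp)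
  have h4 : (4 : ZMod ℓ) ≠ 0 := by
    exact_mod_cast ZMod.natCast_ne_natCast_of_lt (a := 4) (b := 0) (by omega) (by omega) (by simp)
  have hk02 : k ≠ k + 2 := left_eq_add.not.2 h2
  rcases hE.adj_of_ne (a := f (k - 1)) (b := f (k + 3)) (x := z) (y := f (k + 1))
    (hC.injective.ne fun h => h4 (by linear_combination -h)) (Ne.symm (hz' _)) (hz' _)
    (hC.injective.ne fun h => h2 (by linear_combination -h)) (hz' _)
    (hC.injective.ne fun h => h2 (by linear_combination h)) with h | h | h | h
  · exact hC.not_adj_add_one hno (by omega) hz h.symm (by rwa [sub_add_cancel])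
  · refine hno (hC.cycleGraph_succ_isContained_of_chord_sub_one hz hk02 hk hk2 ?_)
    rwa [show k + 2 - 1 = k + 1 by ring]
  · refine hC.not_adj_add_one hno (by omega) hz hk2 ?_
    rw [show k + 2 + 1 = k + 3 by ring]
    exact h.symm
  · refine hno (hC.cycleGraph_succ_isContained_of_chord hz hk02 hk hk2 ?_)
    rw [show k + 2 + 1 = k + 3 by ring]
    exact h.symm

theorem not_adj_add_one_of_adj_of_adj (hE : HasEdgeBetween G 2 2) (hC : G.IsCycleEmbedding f)
    (hno : ¬cycleGraph (ℓ + 1) ⊑ G) (hℓ : 5 ≤ ℓ) {z w : V} (hz : z ∉ Set.range f)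
    (hw : w ∉ Set.range f) (hzw : z ≠ w) {i j : ZMod ℓ} (hij : i ≠ j) (hzi : G.Adj z (f i))
    (hzj : G.Adj z (f j)) : ¬G.Adj w (f (i + 1)) := fun hwi => by
  have hz' : ∀ m, f m ≠ z := fun m h => hz ⟨m, h⟩
  have hw' : ∀ m, f m ≠ w := fun m h => hw ⟨m, h⟩
  have hji : j ≠ i + 1 := fun h => hC.not_adj_add_one hno (by omega) hz hzi (h ▸ hzj)
  rcases hE.adj_of_ne (a := f (i - 1)) (b := f (j - 1)) (x := z) (y := w)
    (hC.injective.ne fun h => hij (by linear_combination h)) hzw (hz' _) (hw' _) (hz' _) (hw' _)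
    with h | h | h | h
  · exact hC.not_adj_add_one hno (by omega) hz h.symm (by rwa [sub_add_cancel])
  · exact hC.not_adj_add_two hE hno hℓ hw h.symm (by rwa [show i - 1 + 2 = i + 1 by ring])
  · exact hC.not_adj_add_one hno (by omega) hz h.symm (by rwa [sub_add_cancel])
  · rcases hE.adj_of_ne (a := f (i + 2)) (b := f (j + 1)) (x := z) (y := w)
      (hC.injective.ne fun h => hji (by linear_combination -h)) hzw (hz' _) (hw' _) (hz' _) (hw' _)
      with h' | h' | h' | h'
    · exact hC.not_adj_add_two hE hno hℓ hz hzi h'.symm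
    · refine hC.not_adj_add_one hno (by omega) hw hwi ?_
      rw [show i + 1 + 1 = i + 2 by ring]
      exact h'.symm
    · exact hC.not_adj_add_one hno (by omega) hz hzj h'.symm
    · refine hC.not_adj_add_two hE hno hℓ hw h.symm ?_
      rw [show j - 1 + 2 = j + 1 by ring]
      exact h'.symm

theorem eq_of_adj_of_adj (hE : HasEdgeBetween G 2 2) (hC : G.IsCycleEmbedding f)
    (hno : ¬cycleGraph (ℓ + 1) ⊑ G) (hℓ : 5 ≤ ℓ) {z w : V} (hz : z ∉ Set.range f)
    (hw : w ∉ Set.range f) (hzw : z ≠ w) {i j : ZMod ℓ} (hzi : G.Adj z (f i))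
    (hzj : G.Adj z (f j)) : i = j := by
  by_contra hij
  rcases hE.adj_of_ne (a := f (i + 1)) (b := f (j + 1)) (x := z) (y := w)
    (hC.injective.ne fun h => hij (by linear_combination h)) hzw (fun h => hz ⟨_, h⟩)
    (fun h => hw ⟨_, h⟩) (fun h => hz ⟨_, h⟩) (fun h => hw ⟨_, h⟩) with h | h | h | h
  · exact hC.not_adj_add_one hno (by omega) hz hzi h.symm
  · exact hC.not_adj_add_one_of_adj_of_adj hE hno hℓ hz hw hzw hij hzi hzj h.symm
  · exact hC.not_adj_add_one hno (by omega) hz hzj h.symm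
  · exact hC.not_adj_add_one_of_adj_of_adj hE hno hℓ hz hw hzw (Ne.symm hij) hzj hzi h.symm

theorem cycleGraph_succ_isContained (hE : HasEdgeBetween G 2 2) (hC : G.IsCycleEmbedding f)
    (hℓ : 6 ≤ ℓ) {x y : V} (hx : x ∉ Set.range f) (hy : y ∉ Set.range f) (hxy : x ≠ y) :
    cycleGraph (ℓ + 1) ⊑ G := by
  by_contra hno
  have hx1 {i j} := hC.eq_of_adj_of_adj hE hno (by omega) hx hy hxy (i := i) (j := j)
  have hy1 {i j} := hC.eq_of_adj_of_adj hE hno (by omega) hy hx hxy.symm (i := i) (j := j)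
  have hsee (a : ℕ) (ha : a + 1 < 6) :
      ∃ m, (m = a ∨ m = a + 1) ∧ (G.Adj x (f m) ∨ G.Adj y (f m)) := by
    rcases hE.adj_of_ne (a := x) (b := y) (x := f a) (y := f (a + 1 : ℕ)) hxy
      (hC.injective.ne (ZMod.natCast_ne_natCast_of_lt (by omega) (by omega) (by omega)))
      (fun h => hx ⟨_, h.symm⟩) (fun h => hx ⟨_, h.symm⟩) (fun h => hy ⟨_, h.symm⟩)
      (fun h => hy ⟨_, h.symm⟩) with h | h | h | h
    exacts [⟨a, .inl rfl, .inl h⟩, ⟨a + 1, .inr rfl, .inl h⟩, ⟨a, .inl rfl, .inr h⟩,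
      ⟨a + 1, .inr rfl, .inr h⟩]
  obtain ⟨m₀, hm₀, h₀⟩ := hsee 0 (by omega)
  obtain ⟨m₁, hm₁, h₁⟩ := hsee 2 (by omega)
  obtain ⟨m₂, hm₂, h₂⟩ := hsee 4 (by omega)
  have hne {a b : ℕ} (ha : a < 6) (hb : b < 6) (hab : a ≠ b) : (a : ZMod ℓ) ≠ b :=
    ZMod.natCast_ne_natCast_of_lt (by omega) (by omega) hab
  have h₀₁ := hne (a := m₀) (b := m₁) (by omega) (by omega) (by omega)
  have h₀₂ := hne (a := m₀) (b := m₂) (by omega) (by omega) (by omega)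
  have h₁₂ := hne (a := m₁) (b := m₂) (by omega) (by omega) (by omega)
  -- pigeonhole: two of `f m₀`, `f m₁`, `f m₂` have the same neighbour among `x`, `y`
  rcases h₀ with h₀ | h₀ <;> rcases h₁ with h₁ | h₁ <;> rcases h₂ with h₂ | h₂ <;>
    first
    | exact h₀₁ (hx1 h₀ h₁) | exact h₀₁ (hy1 h₀ h₁) | exact h₀₂ (hx1 h₀ h₂)
    | exact h₀₂ (hy1 h₀ h₂) | exact h₁₂ (hx1 h₁ h₂) | exact h₁₂ (hy1 h₁ h₂)

end IsCycleEmbedding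

end SimpleGraph

end

theorem cycle_extension_small_case [Fintype V] (G : SimpleGraph V)
    (hE : HasEdgeBetween G 2 2)
    (v : V) (c : G.Walk v v) (hc : c.IsCycle)
    (h6 : 6 ≤ c.length) (hn : c.length + 2 ≤ Fintype.card V) :
    ∃ (w : V) (c' : G.Walk w w), c'.IsCycle ∧ c'.length = c.length + 1 := by
  classical
  have : NeZero c.length := ⟨by omega⟩
  obtain ⟨f, hC⟩ := (cycleGraph_isContained_iff_exists_isCycleEmbedding (by omega)).1
    ((cycleGraph_isContained_iff (by omega)).2 ⟨v, c, hc, rfl⟩)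
  obtain ⟨x, hx, y, hy, hxy⟩ : ∃ x ∉ Set.range f, ∃ y ∉ Set.range f, x ≠ y := by
    have : 1 < (univ.image f)ᶜ.card := by
      rw [card_compl, card_image_of_injective _ hC.injective, card_univ, ZMod.card]
      omega
    obtain ⟨x, hx, y, hy, hxy⟩ := one_lt_card.1 this
    simp only [mem_compl, mem_image, mem_univ, true_and] at hx hy
    exact ⟨x, hx, y, hy, hxy⟩
  exact (cycleGraph_isContained_iff (by omega)).1
    (hC.cycleGraph_succ_isContained hE h6 hx hy hxy)
end

section
/- Let G be a finite simple graph on at least 8 vertices such that between every two disjoint vertex sets of size 2 there is an edge, and suppose G contains a triangle. Then G contains a cycle of length 4. -/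
open SimpleGraph Finset

variable {V : Type*}

/-! Suppose `G` has no `4`-cycle and `abc` is a triangle. Two distinct vertices then have at
most one common neighbour, so a neighbour of `a` other than `b, c` is adjacent to neither `b` nor
`c`; the edge condition for `{b, c}` leaves room for at most one such vertex, and likewise for `b`.
By the edge condition for `{a, b}`, at most one vertex besides `a, b` misses both. Hence
`|V| ≤ 3 + 1 + 1 + 1`. -/

namespace SimpleGraph

variable {G : SimpleGraph V}

theorem exists_isCycle_length_four_of_common_neighbors {x y u w : V} (hxy : x ≠ y)
    (huw : u ≠ w) (hxu : G.Adj x u) (hyu : G.Adj y u) (hxw : G.Adj x w) (hyw : G.Adj y w) :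
    ∃ (v : V) (c : G.Walk v v), c.IsCycle ∧ c.length = 4 := by
  refine ⟨x, .cons hxu (.cons hyu.symm (.cons hyw (.cons hxw.symm .nil))), ?_, rfl⟩
  simp only [Walk.cons_isCycle_iff, Walk.cons_isPath_iff, Walk.isPath_iff_nil,
    Walk.support_cons, Walk.support_nil, Walk.edges_cons, Walk.edges_nil, List.mem_cons,
    List.not_mem_nil, Sym2.eq, Sym2.rel_iff']
  have := hxu.ne; have := hyu.ne; have := hxw.ne; have := hyw.ne
  grind

theorem not_adj_of_adj_of_triangle
    (hC4 : ¬ ∃ (v : V) (c : G.Walk v v), c.IsCycle ∧ c.length = 4) {a b c u : V}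
    (hab : G.Adj a b) (hbc : G.Adj b c) (hac : G.Adj a c) (hau : G.Adj a u) (huc : u ≠ c) :
    ¬ G.Adj b u := fun hbu =>
  hC4 (exists_isCycle_length_four_of_common_neighbors hab.ne huc hau hbu hac hbc)

theorem HasEdgeBetween.subsingleton_nonadj (hE : HasEdgeBetween G 2 2) {x y : V}
    (hxy : x ≠ y) : {u | u ≠ x ∧ u ≠ y ∧ ¬ G.Adj x u ∧ ¬ G.Adj y u}.Subsingleton := by
  classical
  rintro u ⟨hux, huy, hxu, hyu⟩ w ⟨hwx, hwy, hxw, hyw⟩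
  by_contra huw
  obtain ⟨p, hp, q, hq, hpq⟩ := hE {u, w} {x, y}
    (by simp [Finset.disjoint_left, *]) (card_pair_eq_two_iff.mpr huw)
    (card_pair_eq_two_iff.mpr hxy)
  simp only [Finset.mem_insert, Finset.mem_singleton] at hp hq
  rcases hp with rfl | rfl <;> rcases hq with rfl | rfl <;> simp_all [G.adj_comm]

theorem subsingleton_neighborSet_diff_of_triangle (hE : HasEdgeBetween G 2 2)
    (hC4 : ¬ ∃ (v : V) (c : G.Walk v v), c.IsCycle ∧ c.length = 4) {a b c : V}
    (hab : G.Adj a b) (hbc : G.Adj b c) (hac : G.Adj a c) :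
    (G.neighborSet a \ {b, c}).Subsingleton := by
  refine (hE.subsingleton_nonadj hbc.ne).anti ?_
  rintro u ⟨hau, hu⟩
  simp only [Set.mem_insert_iff, Set.mem_singleton_iff, not_or] at hu
  exact ⟨hu.1, hu.2, not_adj_of_adj_of_triangle hC4 hab hbc hac hau hu.2,
    not_adj_of_adj_of_triangle hC4 hac hbc.symm hab hau hu.1⟩

end SimpleGraph

open SimpleGraph in
theorem four_cycle_of_triangle [Fintype V] (G : SimpleGraph V)
    (hn : 8 ≤ Fintype.card V)
    (hE : HasEdgeBetween G 2 2)
    (htri : ∃ x y z : V, G.Adj x y ∧ G.Adj y z ∧ G.Adj x z) :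
    ∃ (w : V) (c : G.Walk w w), c.IsCycle ∧ c.length = 4 := by
  by_contra hC4
  obtain ⟨a, b, c, hab, hbc, hac⟩ := htri
  have hA := subsingleton_neighborSet_diff_of_triangle hE hC4 hab hbc hac
  have hB := subsingleton_neighborSet_diff_of_triangle hE hC4 hab.symm hac hbc
  have hW := hE.subsingleton_nonadj hab.ne
  have hcover : Set.univ ⊆ {a, b, c} ∪ (G.neighborSet a \ {b, c}) ∪
      (G.neighborSet b \ {a, c}) ∪ {u | u ≠ a ∧ u ≠ b ∧ ¬ G.Adj a u ∧ ¬ G.Adj b u} := by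
    intro u _
    simp only [Set.mem_union, Set.mem_insert_iff, Set.mem_singleton_iff, Set.mem_sdiff,
      mem_neighborSet, Set.mem_ofPred_eq]
    tauto
  have htriangle : ({a, b, c} : Set V).ncard ≤ 3 := by
    have := Set.ncard_insert_le a {b, c}
    have := Set.ncard_insert_le b {c}
    rw [Set.ncard_singleton] at this
    omega
  have hcard : Fintype.card V ≤ ({a, b, c} : Set V).ncard + 1 + 1 + 1 := calc
    Fintype.card V = (Set.univ : Set V).ncard := by rw [Set.ncard_univ, Nat.card_eq_fintype_card]
    _ ≤ _ := Set.ncard_le_ncard hcover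
    _ ≤ _ := by
      grw [Set.ncard_union_le, Set.ncard_union_le, Set.ncard_union_le,
        Set.ncard_le_one_iff_subsingleton.mpr hA, Set.ncard_le_one_iff_subsingleton.mpr hB,
        Set.ncard_le_one_iff_subsingleton.mpr hW]
  omega
end

section
/- Let G be a finite simple graph such that between every two disjoint vertex sets of size 2 there is an edge. Then for every pair of distinct vertices u, v of G, at least one of u, v has degree at least (|V(G)| − 3)/2. -/
open SimpleGraph Finset

variable {V : Type*}

namespace HasEdgeBetween

variable [Fintype V] [DecidableEq V] {G : SimpleGraph V} [DecidableRel G.Adj] {a b : ℕ}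

theorem card_filter_nonadj_lt (hE : HasEdgeBetween G a b) {A : Finset V} (hA : #A = a) :
    #{y | y ∉ A ∧ ∀ x ∈ A, ¬ G.Adj x y} < b := by
  by_contra! hb
  obtain ⟨B, hBsub, hBcard⟩ := exists_subset_card_eq hb
  have hdisj : Disjoint A B :=
    disjoint_right.2 fun y hy => ((mem_filter.1 (hBsub hy)).2).1
  obtain ⟨x, hx, y, hy, hxy⟩ := hE A B hdisj hA hBcard
  exact (mem_filter.1 (hBsub hy)).2.2 x hx hxy

/-- Every vertex lies in `A`, is a neighbour of `A`, or is one of the fewer than `b` vertices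
with no neighbour in `A`. -/
theorem card_lt_add_sum_degree (hE : HasEdgeBetween G a b) {A : Finset V} (hA : #A = a) :
    Fintype.card V < a + ∑ x ∈ A, G.degree x + b := by
  have hcover : (univ : Finset V) ⊆
      A ∪ A.biUnion (G.neighborFinset ·) ∪ ({y | y ∉ A ∧ ∀ x ∈ A, ¬ G.Adj x y} : Finset V) := by
    intro y _
    by_cases hyA : y ∈ A
    · simp [hyA]
    · simpa [hyA] using em (∃ x ∈ A, G.Adj x y)
  have hN : #(A.biUnion (G.neighborFinset ·)) ≤ ∑ x ∈ A, G.degree x :=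
    card_biUnion_le.trans_eq (sum_congr rfl fun x _ => G.card_neighborFinset_eq_degree x)
  calc Fintype.card V = #(univ : Finset V) := card_univ.symm
    _ ≤ #A + #(A.biUnion (G.neighborFinset ·)) + #{y | y ∉ A ∧ ∀ x ∈ A, ¬ G.Adj x y} :=
      (card_le_card hcover).trans <| (card_union_le _ _).trans <|
        Nat.add_le_add_right (card_union_le _ _) _
    _ < a + ∑ x ∈ A, G.degree x + b := by
      have := hE.card_filter_nonadj_lt hA
      omega

end HasEdgeBetween

theorem degree_lower_bound [Fintype V] (G : SimpleGraph V) [DecidableRel G.Adj]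
    (hE : HasEdgeBetween G 2 2) (u v : V) (huv : u ≠ v) :
    ((Fintype.card V : ℝ) - 3) / 2 ≤ G.degree u ∨
      ((Fintype.card V : ℝ) - 3) / 2 ≤ G.degree v := by
  classical
  have hcard : Fintype.card V < 2 + (G.degree u + G.degree v) + 2 := by
    simpa [sum_pair huv] using hE.card_lt_add_sum_degree (card_pair huv)
  have hcard' : (Fintype.card V : ℝ) ≤ 3 + G.degree u + G.degree v := by
    exact_mod_cast (by omega : Fintype.card V ≤ 3 + G.degree u + G.degree v)
  by_contra! h
  linarith [h.1, h.2]
end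

section
/- Let G be a finite simple graph, let C be a cycle of length ℓ ≥ 6 in G, and let x be a vertex not on C with at least 3 neighbors on C. Fix an orientation of C and for v on C let v⁻ denote the predecessor of v. Suppose x has neighbors z₁, z₂, z₃ on C, no two of which are consecutive on C, and suppose there is an edge between the sets {z₁⁻, x} and {z₂⁻, z₃⁻}. Then G contains a cycle of length ℓ + 1 whose vertex set is V(C) ∪ {x}. -/
open SimpleGraph Finset

variable {V : Type*}

/-!
If `x ∼ f a` and `x ∼ f b` with `a ≠ b`, a chord `f (a - 1) ∼ f (b - 1)` lets `x` be absorbed into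
`C` by a rotation: `x, f a, f (a + 1), …, f (b - 1), f (a - 1), f (a - 2), …, f b, x` runs through
the arc of `C` from `a` to `b - 1` forwards and the arc from `b` to `a - 1` backwards. An edge from
`z₁⁻` to `z₂⁻` or `z₃⁻` is such a chord. An edge `x ∼ zᵢ⁻` is the degenerate rotation with
`b = a - 1`, whose chord `f (a - 1) ∼ f (a - 2)` is an edge of `C` itself.
-/

section

variable {G : SimpleGraph V}

section arc

variable {ℓ : ℕ} (f : ZMod ℓ → V)

def arc (a : ZMod ℓ) (n : ℕ) : List V := (List.range n).map fun j : ℕ => f (a + j)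

theorem arc_add (a : ZMod ℓ) (m n : ℕ) : arc f a (m + n) = arc f a m ++ arc f (a + m) n := by
  simp [arc, List.range_add, add_assoc]

@[simp]
theorem length_arc (a : ZMod ℓ) (n : ℕ) : (arc f a n).length = n := by
  simp [arc]

theorem head?_arc (a : ZMod ℓ) (n : ℕ) : (arc f a (n + 1)).head? = some (f a) := by
  simp [arc, List.head?_range]

theorem getLast?_arc (a : ZMod ℓ) (n : ℕ) : (arc f a (n + 1)).getLast? = some (f (a + n)) := by
  simp [arc, List.getLast?_range]

theorem isChain_arc (hadj : ∀ i, G.Adj (f i) (f (i + 1))) (a : ZMod ℓ) (n : ℕ) :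
    (arc f a n).IsChain G.Adj := by
  rw [arc, List.isChain_map, List.isChain_range]
  intro m _
  simpa [add_assoc] using hadj (a + m)

theorem nodup_arc (hf : Function.Injective f) (a : ZMod ℓ) {n : ℕ} (hn : n ≤ ℓ) :
    (arc f a n).Nodup := by
  refine List.Nodup.map_on (fun j hj k hk hjk => ?_) List.nodup_range
  rw [List.mem_range] at hj hk
  have := (ZMod.natCast_eq_natCast_iff' j k ℓ).1 (add_left_cancel (hf hjk))
  rwa [Nat.mod_eq_of_lt (by omega), Nat.mod_eq_of_lt (by omega)] at this

theorem mem_full_arc_iff [NeZero ℓ] (a : ZMod ℓ) {v : V} : v ∈ arc f a ℓ ↔ v ∈ Set.range f := by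
  simp only [arc, List.mem_map, List.mem_range, Set.mem_range]
  refine ⟨fun ⟨j, _, hj⟩ => ⟨_, hj⟩, fun ⟨i, hi⟩ => ⟨(i - a).val, ZMod.val_lt _, ?_⟩⟩
  simpa using hi

end arc

theorem exists_isCycle_of_isChain_cons {x y : V} {L : List V} (hnodup : (x :: L).Nodup)
    (hchain : (x :: L).IsChain G.Adj) (hlen : 2 ≤ L.length) (hlast : L.getLast? = some y)
    (hyx : G.Adj y x) :
    ∃ c : G.Walk y y, c.IsCycle ∧ c.length = L.length + 1 ∧
      {v | v ∈ c.support} = {v | v ∈ x :: L} := by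
  obtain ⟨z, M, rfl⟩ : ∃ z M, L = z :: M := List.exists_cons_of_length_pos (by omega)
  have hyM : y ∈ M := by
    obtain ⟨w, M', rfl⟩ : ∃ w M', M = w :: M' :=
      List.exists_cons_of_length_pos (by simp only [List.length_cons] at hlen; omega)
    exact List.mem_of_getLast? (by simpa using hlast)
  obtain ⟨q, hq, hqlen⟩ : ∃ q : G.Walk z y, q.support = z :: M ∧ q.length = M.length :=
    ⟨(Walk.ofSupport _ (List.cons_ne_nil _ _) hchain.of_cons).copy List.head_cons
      ((List.getLast_eq_iff_getLast?_eq_some _).2 hlast),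
      by rw [Walk.support_copy, Walk.support_ofSupport],
      by rw [Walk.length_copy, Walk.length_ofSupport]; simp⟩
  have hedge : s(y, x) ∉ (Walk.cons hchain.rel q).edges := by
    rw [Walk.edges_cons, List.mem_cons, Sym2.eq_swap, Sym2.eq_iff]
    rintro (h | h)
    · grind
    · exact hnodup.notMem (hq ▸ q.fst_mem_support_of_mem_edges h)
  refine ⟨Walk.cons hyx (Walk.cons hchain.rel q),
    (Walk.cons_isCycle_iff _ _).2 ⟨Walk.IsPath.mk' (by simpa [hq] using hnodup), hedge⟩,
    by simp [hqlen], ?_⟩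
  ext v
  simp only [Walk.support_cons, hq, Set.mem_ofPred_eq, List.mem_cons]
  grind

theorem exists_isCycle_of_rotation {ℓ : ℕ} [NeZero ℓ] {f : ZMod ℓ → V} (hf : Function.Injective f)
    (hadj : ∀ i, G.Adj (f i) (f (i + 1))) {x : V} (hx : x ∉ Set.range f) {a b : ZMod ℓ}
    (hab : a ≠ b) (hxa : G.Adj x (f a)) (hxb : G.Adj x (f b))
    (hjump : G.Adj (f (a - 1)) (f (b - 1))) :
    ∃ (w : V) (c : G.Walk w w), c.IsCycle ∧ c.length = ℓ + 1 ∧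
      {v | v ∈ c.support} = Set.range f ∪ {x} := by
  obtain ⟨m, k, hℓ, hb⟩ : ∃ m k : ℕ, m + 1 + (k + 1) = ℓ ∧ b = a + (m + 1 : ℕ) := by
    have hd0 : (b - a).val ≠ 0 := by simpa [sub_eq_zero] using hab.symm
    have hdℓ := ZMod.val_lt (b - a)
    exact ⟨(b - a).val - 1, ℓ - (b - a).val - 1, by omega,
      by rw [Nat.sub_add_cancel (by omega), ZMod.natCast_zmod_val]; abel⟩
  have hℓ0 : ((m + 1 + (k + 1) : ℕ) : ZMod ℓ) = 0 := hℓ ▸ ZMod.natCast_self ℓ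
  set L := arc f a (m + 1) ++ (arc f b (k + 1)).reverse
  have hperm : L.Perm (arc f a ℓ) := by
    have hsplit := arc_add f a (m + 1) (k + 1)
    rw [hℓ, ← hb] at hsplit
    rw [hsplit]
    exact List.Perm.append_left _ (List.reverse_perm _)
  have hmem : ∀ v, v ∈ L ↔ v ∈ Set.range f := fun v => hperm.mem_iff.trans (mem_full_arc_iff f a)
  have hturn : G.Adj (f (a + m)) (f (b + k)) := by
    convert hjump.symm using 2
    · rw [hb]; push_cast; ring
    · rw [hb, ← sub_eq_zero, ← hℓ0]; push_cast; ring
  have hchain : (x :: L).IsChain G.Adj := by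
    refine List.isChain_cons.2 ⟨by simpa [L, List.head?_append, head?_arc] using hxa, ?_⟩
    refine List.isChain_append.2 ⟨isChain_arc f hadj a _, ?_, ?_⟩
    · exact List.isChain_reverse.2 ((isChain_arc f hadj b _).imp fun _ _ h => h.symm)
    · simpa [getLast?_arc, List.head?_reverse] using hturn
  obtain ⟨c, hc, hlen, hsupp⟩ := exists_isCycle_of_isChain_cons
    (List.nodup_cons.2 ⟨fun h => hx ((hmem x).1 h), hperm.nodup_iff.2 (nodup_arc f hf a le_rfl)⟩)
    hchain (by simp [L]; omega) (by simp [L, List.getLast?_append, head?_arc]) hxb.symm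
  refine ⟨_, c, hc, by simp [hlen, L, ← hℓ], ?_⟩
  ext v
  simp [hsupp, hmem]

theorem exists_isCycle_of_adj_pred {ℓ : ℕ} (hℓ : 1 < ℓ) {f : ZMod ℓ → V}
    (hf : Function.Injective f) (hadj : ∀ i, G.Adj (f i) (f (i + 1))) {x : V}
    (hx : x ∉ Set.range f) {a : ZMod ℓ} (hxa : G.Adj x (f a)) (hxa' : G.Adj x (f (a - 1))) :
    ∃ (w : V) (c : G.Walk w w), c.IsCycle ∧ c.length = ℓ + 1 ∧
      {v | v ∈ c.support} = Set.range f ∪ {x} := by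
  have : NeZero ℓ := ⟨by omega⟩
  have : Fact (1 < ℓ) := ⟨hℓ⟩
  refine exists_isCycle_of_rotation hf hadj hx (b := a - 1) ?_ hxa hxa' ?_
  · exact fun h => one_ne_zero (sub_eq_self.1 h.symm)
  · simpa using (hadj (a - 1 - 1)).symm

end

theorem cycle_extension_rotation_general (G : SimpleGraph V) (ℓ : ℕ) (h6 : 6 ≤ ℓ)
    (f : ZMod ℓ → V) (hinj : Function.Injective f)
    (hadj : ∀ i : ZMod ℓ, G.Adj (f i) (f (i + 1)))
    (x : V) (hx : x ∉ Set.range f)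
    (i₁ i₂ i₃ : ZMod ℓ)
    (h12 : i₁ ≠ i₂) (h13 : i₁ ≠ i₃)
    (hz1 : G.Adj x (f i₁)) (hz2 : G.Adj x (f i₂)) (hz3 : G.Adj x (f i₃))
    (hedge : ∃ u ∈ ({f (i₁ - 1), x} : Set V), ∃ w ∈ ({f (i₂ - 1), f (i₃ - 1)} : Set V),
      G.Adj u w) :
    ∃ (w : V) (c : G.Walk w w), c.IsCycle ∧ c.length = ℓ + 1 ∧
      {y | y ∈ c.support} = Set.range f ∪ {x} := by
  have : NeZero ℓ := ⟨by omega⟩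
  obtain ⟨u, hu, w, hw, huw⟩ := hedge
  rcases hu with rfl | rfl <;> rcases hw with rfl | rfl
  · exact exists_isCycle_of_rotation hinj hadj hx h12 hz1 hz2 huw
  · exact exists_isCycle_of_rotation hinj hadj hx h13 hz1 hz3 huw
  · exact exists_isCycle_of_adj_pred (by omega) hinj hadj hx hz2 huw
  · exact exists_isCycle_of_adj_pred (by omega) hinj hadj hx hz3 huw

theorem cycle_extension_rotation (G : SimpleGraph V) (ℓ : ℕ) (h6 : 6 ≤ ℓ)
    (f : ZMod ℓ → V) (hinj : Function.Injective f)
    (hadj : ∀ i : ZMod ℓ, G.Adj (f i) (f (i + 1)))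
    (x : V) (hx : x ∉ Set.range f)
    (i₁ i₂ i₃ : ZMod ℓ)
    (h12 : i₁ ≠ i₂) (h13 : i₁ ≠ i₃) (h23 : i₂ ≠ i₃)
    (hz1 : G.Adj x (f i₁)) (hz2 : G.Adj x (f i₂)) (hz3 : G.Adj x (f i₃))
    (hnoncons : ∀ j k : ZMod ℓ, j ∈ ({i₁, i₂, i₃} : Set (ZMod ℓ)) →
      k ∈ ({i₁, i₂, i₃} : Set (ZMod ℓ)) → j ≠ k → j ≠ k + 1)
    (hedge : ∃ u ∈ ({f (i₁ - 1), x} : Set V), ∃ w ∈ ({f (i₂ - 1), f (i₃ - 1)} : Set V),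
      G.Adj u w) :
    ∃ (w : V) (c : G.Walk w w), c.IsCycle ∧ c.length = ℓ + 1 ∧
      {y | y ∈ c.support} = Set.range f ∪ {x} :=
  cycle_extension_rotation_general G ℓ h6 f hinj hadj x hx i₁ i₂ i₃ h12 h13 hz1 hz2 hz3 hedge
end

section
/- Let G be a finite simple graph and suppose there exist positive integers a ≤ b such that every pair of disjoint vertex sets of sizes a and b has an edge between them. If u and v are two non-adjacent vertices of G with deg(u) ≥ b and deg(v) ≥ b, then there is a path in G from u to v. -/
open SimpleGraph Finset

variable {V : Type*}

/-!
Pick `a` neighbours of `v` and `b` neighbours of `u`. If `u` and `v` lie in different components,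
these two sets would be disjoint, so the hypothesis would give an edge between them, and that
edge would join the two components.
-/

theorem HasEdgeBetween.reachable_of_forall_reachable {G : SimpleGraph V} {a b : ℕ}
    (hE : HasEdgeBetween G a b) {u v : V} {A B : Finset V} (hA : #A = a) (hB : #B = b)
    (hAv : ∀ x ∈ A, G.Reachable v x) (hBu : ∀ y ∈ B, G.Reachable u y) :
    G.Reachable u v := by
  by_contra huv
  have hdisj : Disjoint A B :=
    disjoint_left.2 fun x hxA hxB => huv ((hBu x hxB).trans (hAv x hxA).symm)
  obtain ⟨x, hxA, y, hyB, hxy⟩ := hE A B hdisj hA hB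
  exact huv ((hBu y hyB).trans (hxy.reachable.symm.trans (hAv x hxA).symm))

theorem HasEdgeBetween.reachable_of_le_degree [Fintype V] {G : SimpleGraph V}
    [DecidableRel G.Adj] {a b : ℕ} (hE : HasEdgeBetween G a b) {u v : V}
    (hv : a ≤ G.degree v) (hu : b ≤ G.degree u) : G.Reachable u v := by
  have reachable_of_mem {w : V} {A : Finset V} (hA : A ⊆ G.neighborFinset w) :
      ∀ x ∈ A, G.Reachable w x := fun x hx =>
    ((G.mem_neighborFinset w x).1 (hA hx)).reachable
  obtain ⟨A, hAv, hA⟩ := exists_subset_card_eq (s := G.neighborFinset v) (by simpa using hv)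
  obtain ⟨B, hBu, hB⟩ := exists_subset_card_eq (s := G.neighborFinset u) (by simpa using hu)
  exact hE.reachable_of_forall_reachable hA hB (reachable_of_mem hAv) (reachable_of_mem hBu)

theorem path_between_nonadjacent_general [Fintype V] (G : SimpleGraph V)
    [DecidableRel G.Adj]
    (a b : ℕ) (hab : a ≤ b) (hE : HasEdgeBetween G a b)
    (u v : V)
    (hu : b ≤ G.degree u) (hv : b ≤ G.degree v) :
    G.Reachable u v :=
  hE.reachable_of_le_degree (hab.trans hv) hu

theorem path_between_nonadjacent [Fintype V] (G : SimpleGraph V)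
    [DecidableRel G.Adj]
    (a b : ℕ) (ha : 0 < a) (hab : a ≤ b) (hE : HasEdgeBetween G a b)
    (u v : V) (huv : u ≠ v) (hna : ¬ G.Adj u v)
    (hu : b ≤ G.degree u) (hv : b ≤ G.degree v) :
    G.Reachable u v :=
  path_between_nonadjacent_general G a b hab hE u v hu hv
end
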